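/- Let A and B be nonnegative n×n matrices. Then ‖A^(1/3) ∘ (Bᵀ)^(1/3) ∘ A^(1/3)‖ ≤ r((AᵀBᵀ)^(1/3) ∘ (AᵀA)^(1/3) ∘ (BA)^(1/3))^{1/2} ≤ ‖ABA‖^{1/3}, where ‖·‖ is the ℓ²-operator norm, r the spectral radius, ∘ the Hadamard product and X^(1/3) the entrywise cube root. -/

import Mathlib

open scoped ENNReal
open Finset Matrix
noncomputable def specRad {n : ℕ} (A : Matrix (Fin n) (Fin n) ℝ) : ℝ≥0∞ :=
  spectralRadius ℂ (A.map (algebraMap ℝ ℂ))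
noncomputable def opNorm {n : ℕ} (A : Matrix (Fin n) (Fin n) ℝ) : ℝ :=
  ‖Matrix.toEuclideanCLM (𝕜 := ℝ) A‖

/-!
Write `P ⊛ Q ⊛ R` for `hadamardGeomMean P Q R = P^(1/3) ∘ Q^(1/3) ∘ R^(1/3)`. For nonnegative
matrices, Hölder's inequality with exponents `(3, 3, 3)` applied to each entry of a product gives
the entrywise bound `(P ⊛ Q ⊛ R) (P' ⊛ Q' ⊛ R') ≤ PP' ⊛ QQ' ⊛ RR'`.

With `C = A ⊛ Bᵀ ⊛ A` and `D = X ⊛ Y ⊛ Z`, where `X = AᵀBᵀ`, `Y = AᵀA`, `Z = BA`, this gives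
`CᵀC ≤ D`, so `‖C‖² = r(CᵀC) ≤ r(D)` because the spectral radius is monotone on nonnegative
matrices. It also gives `D³ ≤ XYZ ⊛ YZX ⊛ ZXY`. Applied to powers, the same Hölder inequality on
row sums gives `‖(P ⊛ Q ⊛ R)^k‖_∞³ ≤ ‖P^k‖_∞ ‖Q^k‖_∞ ‖R^k‖_∞`, and Gelfand's formula turns this
into `r(P ⊛ Q ⊛ R)³ ≤ r(P) r(Q) r(R)`. The cyclic products `XYZ`, `YZX`, `ZXY` have the same
spectral radius, so `r(D)³ ≤ r(XYZ) = r((ABA)ᵀ ABA) = ‖ABA‖²`.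
-/

theorem Real.sum_cbrt_mul_cbrt_mul_cbrt_le {ι : Type*} (s : Finset ι) {f g h : ι → ℝ}
    (hf : ∀ i ∈ s, 0 ≤ f i) (hg : ∀ i ∈ s, 0 ≤ g i) (hh : ∀ i ∈ s, 0 ≤ h i) :
    ∑ i ∈ s, f i ^ ((1:ℝ)/3) * g i ^ ((1:ℝ)/3) * h i ^ ((1:ℝ)/3) ≤
      (∑ i ∈ s, f i) ^ ((1:ℝ)/3) * (∑ i ∈ s, g i) ^ ((1:ℝ)/3) * (∑ i ∈ s, h i) ^ ((1:ℝ)/3) := by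
  have hgh : ∀ i ∈ s, 0 ≤ g i * h i := fun i hi => mul_nonneg (hg i hi) (hh i hi)
  have cauchy_schwarz : ∑ i ∈ s, (g i * h i) ^ ((1:ℝ)/2) ≤
      (∑ i ∈ s, g i) ^ ((1:ℝ)/2) * (∑ i ∈ s, h i) ^ ((1:ℝ)/2) := by
    have h2 : (1:ℝ).HolderTriple 1 (1/2) := ⟨by norm_num, by norm_num, by norm_num⟩
    simpa using Real.Lr_rpow_le_Lp_mul_Lq_of_nonneg s h2 hg hh
  have h3 : (1:ℝ).HolderTriple (1/2) (1/3) := ⟨by norm_num, by norm_num, by norm_num⟩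
  have hsg := Finset.sum_nonneg hg
  have hsh := Finset.sum_nonneg hh
  calc ∑ i ∈ s, f i ^ ((1:ℝ)/3) * g i ^ ((1:ℝ)/3) * h i ^ ((1:ℝ)/3)
      = ∑ i ∈ s, (f i * (g i * h i)) ^ ((1:ℝ)/3) := by
        refine Finset.sum_congr rfl fun i hi => ?_
        rw [Real.mul_rpow (hf i hi) (hgh i hi), Real.mul_rpow (hg i hi) (hh i hi), mul_assoc]
    _ ≤ (∑ i ∈ s, f i) ^ ((1:ℝ)/3) * (∑ i ∈ s, (g i * h i) ^ ((1:ℝ)/2)) ^ ((2:ℝ) / 3) := by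
        convert Real.Lr_rpow_le_Lp_mul_Lq_of_nonneg s h3 hf hgh using 3 <;> norm_num
    _ ≤ (∑ i ∈ s, f i) ^ ((1:ℝ)/3) *
          ((∑ i ∈ s, g i) ^ ((1:ℝ)/2) * (∑ i ∈ s, h i) ^ ((1:ℝ)/2)) ^ ((2:ℝ) / 3) := by
        have hsf := Finset.sum_nonneg hf
        have hsgh := Finset.sum_nonneg fun i hi => Real.rpow_nonneg (hgh i hi) ((1:ℝ)/2)
        exact mul_le_mul_of_nonneg_left (Real.rpow_le_rpow hsgh cauchy_schwarz (by norm_num))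
          (by positivity)
    _ = _ := by
        rw [Real.mul_rpow (by positivity) (by positivity), ← Real.rpow_mul hsg,
          ← Real.rpow_mul hsh, mul_assoc]
        norm_num

namespace Matrix

variable {l m n o : Type*}

theorem abs_pow_apply_le [Fintype m] [DecidableEq m] {M N : Matrix m m ℝ}
    (h : ∀ i j, |M i j| ≤ N i j) (k : ℕ) (i j : m) : |(M ^ k) i j| ≤ (N ^ k) i j := by
  induction k generalizing j with
  | zero => by_cases hij : i = j <;> simp [hij]
  | succ k ih =>
    simp only [pow_succ, mul_apply]
    refine (abs_sum_le_sum_abs _ _).trans (sum_le_sum fun l _ => ?_)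
    rw [abs_mul]
    exact mul_le_mul (ih l) (h l j) (abs_nonneg _) ((abs_nonneg _).trans (ih l))

theorem mul_apply_nonneg [Fintype m] {M : Matrix l m ℝ} {N : Matrix m n ℝ}
    (hM : ∀ i j, 0 ≤ M i j) (hN : ∀ i j, 0 ≤ N i j) (i : l) (j : n) : 0 ≤ (M * N) i j :=
  sum_nonneg fun k _ => mul_nonneg (hM i k) (hN k j)

theorem mul_apply_le_mul_apply_of_le [Fintype m] {M M' : Matrix l m ℝ} {N : Matrix m n ℝ}
    (h : ∀ i j, M i j ≤ M' i j) (hN : ∀ i j, 0 ≤ N i j) (i : l) (j : n) :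
    (M * N) i j ≤ (M' * N) i j :=
  sum_le_sum fun k _ => mul_le_mul_of_nonneg_right (h i k) (hN k j)

noncomputable def hadamardGeomMean (P Q R : Matrix l n ℝ) : Matrix l n ℝ :=
  of fun i j => P i j ^ ((1:ℝ)/3) * Q i j ^ ((1:ℝ)/3) * R i j ^ ((1:ℝ)/3)

section HadamardGeomMean

variable {P Q R : Matrix l n ℝ}

theorem hadamardGeomMean_apply (P Q R : Matrix l n ℝ) (i : l) (j : n) :
    hadamardGeomMean P Q R i j = P i j ^ ((1:ℝ)/3) * Q i j ^ ((1:ℝ)/3) * R i j ^ ((1:ℝ)/3) :=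
  rfl

theorem hadamardGeomMean_nonneg (hP : ∀ i j, 0 ≤ P i j) (hQ : ∀ i j, 0 ≤ Q i j)
    (hR : ∀ i j, 0 ≤ R i j) (i : l) (j : n) : 0 ≤ hadamardGeomMean P Q R i j := by
  have := hP i j; have := hQ i j; have := hR i j
  rw [hadamardGeomMean_apply]; positivity

theorem transpose_hadamardGeomMean (P Q R : Matrix l n ℝ) :
    (hadamardGeomMean P Q R)ᵀ = hadamardGeomMean Pᵀ Qᵀ Rᵀ :=
  rfl

theorem hadamardGeomMean_comm (P Q R : Matrix l n ℝ) :
    hadamardGeomMean P Q R = hadamardGeomMean Q P R := by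
  ext i j; simp only [hadamardGeomMean_apply]; ring

theorem hadamardGeomMean_rotate (P Q R : Matrix l n ℝ) :
    hadamardGeomMean P Q R = hadamardGeomMean Q R P := by
  ext i j; simp only [hadamardGeomMean_apply]; ring

theorem hadamardGeomMean_mul_apply_le [Fintype n] {P' Q' R' : Matrix n o ℝ}
    (hP : ∀ i j, 0 ≤ P i j) (hQ : ∀ i j, 0 ≤ Q i j) (hR : ∀ i j, 0 ≤ R i j)
    (hP' : ∀ i j, 0 ≤ P' i j) (hQ' : ∀ i j, 0 ≤ Q' i j) (hR' : ∀ i j, 0 ≤ R' i j)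
    (i : l) (j : o) :
    (hadamardGeomMean P Q R * hadamardGeomMean P' Q' R') i j ≤
      hadamardGeomMean (P * P') (Q * Q') (R * R') i j := by
  have hterm : ∀ k, hadamardGeomMean P Q R i k * hadamardGeomMean P' Q' R' k j =
      (P i k * P' k j) ^ ((1:ℝ)/3) * (Q i k * Q' k j) ^ ((1:ℝ)/3) *
        (R i k * R' k j) ^ ((1:ℝ)/3) := fun k => by
    simp only [hadamardGeomMean_apply, Real.mul_rpow (hP i k) (hP' k j),
      Real.mul_rpow (hQ i k) (hQ' k j), Real.mul_rpow (hR i k) (hR' k j)]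
    ring
  rw [mul_apply, sum_congr rfl fun k _ => hterm k, hadamardGeomMean_apply]
  simp only [mul_apply]
  exact Real.sum_cbrt_mul_cbrt_mul_cbrt_le _ (fun k _ => mul_nonneg (hP i k) (hP' k j))
    (fun k _ => mul_nonneg (hQ i k) (hQ' k j)) (fun k _ => mul_nonneg (hR i k) (hR' k j))

section Square

variable [Fintype n] [DecidableEq n] {P Q R : Matrix n n ℝ}
  (hP : ∀ i j, 0 ≤ P i j) (hQ : ∀ i j, 0 ≤ Q i j) (hR : ∀ i j, 0 ≤ R i j)
include hP hQ hR

theorem hadamardGeomMean_pow_apply_le (k : ℕ) (i j : n) :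
    (hadamardGeomMean P Q R ^ k) i j ≤ hadamardGeomMean (P ^ k) (Q ^ k) (R ^ k) i j := by
  induction k generalizing i j with
  | zero =>
    by_cases hij : i = j <;> simp [hij, hadamardGeomMean_apply]
  | succ k ih =>
    simp only [pow_succ]
    exact (mul_apply_le_mul_apply_of_le ih (hadamardGeomMean_nonneg hP hQ hR) i j).trans
      (hadamardGeomMean_mul_apply_le (pow_apply_nonneg hP k) (pow_apply_nonneg hQ k)
        (pow_apply_nonneg hR k) hP hQ hR i j)

theorem hadamardGeomMean_pow_three_apply_le (i j : n) :
    (hadamardGeomMean P Q R ^ 3) i j ≤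
      hadamardGeomMean (P * Q * R) (Q * R * P) (R * P * Q) i j := by
  have h₁ : hadamardGeomMean P Q R = hadamardGeomMean Q R P := hadamardGeomMean_rotate P Q R
  have h₂ : hadamardGeomMean P Q R = hadamardGeomMean R P Q := (hadamardGeomMean_rotate R P Q).symm
  calc (hadamardGeomMean P Q R ^ 3) i j
      = (hadamardGeomMean P Q R * hadamardGeomMean Q R P * hadamardGeomMean R P Q) i j := by
        rw [pow_three', ← h₁, ← h₂]
    _ ≤ (hadamardGeomMean (P * Q) (Q * R) (R * P) * hadamardGeomMean R P Q) i j :=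
        mul_apply_le_mul_apply_of_le (hadamardGeomMean_mul_apply_le hP hQ hR hQ hR hP)
          (hadamardGeomMean_nonneg hR hP hQ) i j
    _ ≤ hadamardGeomMean (P * Q * R) (Q * R * P) (R * P * Q) i j :=
        hadamardGeomMean_mul_apply_le (mul_apply_nonneg hP hQ) (mul_apply_nonneg hQ hR)
          (mul_apply_nonneg hR hP) hR hP hQ i j

end Square

end HadamardGeomMean

section LinftyOp

open scoped Matrix.Norms.Operator

variable [Fintype m] [Fintype n]

theorem sum_abs_le_linfty_opNorm (M : Matrix m n ℝ) (i : m) : ∑ j, |M i j| ≤ ‖M‖ := by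
  rw [linfty_opNorm_def]
  simpa [Real.norm_eq_abs] using
    NNReal.coe_le_coe.mpr (Finset.le_sup (f := fun i => ∑ j, ‖M i j‖₊) (mem_univ i))

theorem linfty_opNorm_le_of_sum_abs_le {M : Matrix m n ℝ} {c : ℝ} (hc : 0 ≤ c)
    (h : ∀ i, ∑ j, |M i j| ≤ c) : ‖M‖ ≤ c := by
  lift c to NNReal using hc
  rw [linfty_opNorm_def, NNReal.coe_le_coe]
  exact Finset.sup_le fun i _ => by simpa [← NNReal.coe_le_coe, Real.norm_eq_abs] using h i

theorem linfty_opNorm_le_of_abs_le {M N : Matrix m n ℝ} (h : ∀ i j, |M i j| ≤ N i j) :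
    ‖M‖ ≤ ‖N‖ :=
  linfty_opNorm_le_of_sum_abs_le (norm_nonneg _) fun i =>
    (sum_le_sum fun j _ => (h i j).trans (le_abs_self _)).trans (sum_abs_le_linfty_opNorm N i)

theorem linfty_opNNNorm_map_ofReal (M : Matrix m n ℝ) : ‖M.map (algebraMap ℝ ℂ)‖₊ = ‖M‖₊ := by
  simp [linfty_opNNNorm_def]

theorem linfty_opNorm_hadamardGeomMean_pow_three_le {P Q R : Matrix m n ℝ}
    (hP : ∀ i j, 0 ≤ P i j) (hQ : ∀ i j, 0 ≤ Q i j) (hR : ∀ i j, 0 ≤ R i j) :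
    ‖hadamardGeomMean P Q R‖ ^ 3 ≤ ‖P‖ * ‖Q‖ * ‖R‖ := by
  have row_le : ∀ {M : Matrix m n ℝ} i, ∑ j, M i j ≤ ‖M‖ := fun i =>
    (sum_le_sum fun j _ => le_abs_self _).trans (sum_abs_le_linfty_opNorm _ i)
  have hle : ‖hadamardGeomMean P Q R‖ ≤ ‖P‖ ^ ((1:ℝ)/3) * ‖Q‖ ^ ((1:ℝ)/3) * ‖R‖ ^ ((1:ℝ)/3) := by
    refine linfty_opNorm_le_of_sum_abs_le (by positivity) fun i => ?_
    have hsP := sum_nonneg fun j (_ : j ∈ univ) => hP i j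
    have hsQ := sum_nonneg fun j (_ : j ∈ univ) => hQ i j
    have hsR := sum_nonneg fun j (_ : j ∈ univ) => hR i j
    calc ∑ j, |hadamardGeomMean P Q R i j| = ∑ j, hadamardGeomMean P Q R i j :=
          sum_congr rfl fun j _ => abs_of_nonneg (hadamardGeomMean_nonneg hP hQ hR i j)
      _ ≤ (∑ j, P i j) ^ ((1:ℝ)/3) * (∑ j, Q i j) ^ ((1:ℝ)/3) * (∑ j, R i j) ^ ((1:ℝ)/3) :=
          Real.sum_cbrt_mul_cbrt_mul_cbrt_le _ (fun j _ => hP i j) (fun j _ => hQ i j)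
            (fun j _ => hR i j)
      _ ≤ _ := by gcongr <;> exact row_le i
  calc ‖hadamardGeomMean P Q R‖ ^ 3
      ≤ (‖P‖ ^ ((1:ℝ)/3) * ‖Q‖ ^ ((1:ℝ)/3) * ‖R‖ ^ ((1:ℝ)/3)) ^ 3 := by gcongr
    _ = ‖P‖ * ‖Q‖ * ‖R‖ := by
      simp only [mul_pow, ← Real.rpow_natCast, ← Real.rpow_mul (norm_nonneg _)]
      norm_num

theorem linfty_opNNNorm_map_ofReal_pow [DecidableEq m] (M : Matrix m m ℝ) (k : ℕ) :
    ‖M.map (algebraMap ℝ ℂ) ^ k‖₊ = ‖M ^ k‖₊ := by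
  rw [← Matrix.map_pow, linfty_opNNNorm_map_ofReal]

end LinftyOp

section Complexify

variable [Fintype n]

def complexify (u v : EuclideanSpace ℝ n) : EuclideanSpace ℂ n :=
  WithLp.toLp 2 fun i => ⟨u i, v i⟩

theorem norm_complexify_sq (u v : EuclideanSpace ℝ n) :
    ‖complexify u v‖ ^ 2 = ‖u‖ ^ 2 + ‖v‖ ^ 2 := by
  simp only [EuclideanSpace.norm_sq_eq, ← Finset.sum_add_distrib, Complex.sq_norm,
    Complex.normSq_mk, Real.norm_eq_abs, sq_abs, complexify, ← sq]

variable [DecidableEq n]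

theorem toEuclideanCLM_map_ofReal_complexify (M : Matrix n n ℝ) (u v : EuclideanSpace ℝ n) :
    toEuclideanCLM (𝕜 := ℂ) (M.map (↑)) (complexify u v) =
      complexify (toEuclideanCLM (𝕜 := ℝ) M u) (toEuclideanCLM (𝕜 := ℝ) M v) := by
  ext i
  apply Complex.ext <;> simp [complexify, mulVec, dotProduct, Complex.re_sum, Complex.im_sum]

theorem norm_toEuclideanCLM_map_ofReal (M : Matrix n n ℝ) :
    ‖toEuclideanCLM (𝕜 := ℂ) (M.map (↑))‖ = ‖toEuclideanCLM (𝕜 := ℝ) M‖ := by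
  set T := toEuclideanCLM (𝕜 := ℝ) M
  set Tc := toEuclideanCLM (𝕜 := ℂ) (M.map ((↑) : ℝ → ℂ))
  apply le_antisymm
  · refine Tc.opNorm_le_bound (norm_nonneg _) fun z => ?_
    have hz : z = complexify (WithLp.toLp 2 fun i => (z i).re)
        (WithLp.toLp 2 fun i => (z i).im) := by
      ext i; rfl
    rw [hz, toEuclideanCLM_map_ofReal_complexify, ← sq_le_sq₀ (norm_nonneg _) (by positivity),
      mul_pow, norm_complexify_sq, norm_complexify_sq, mul_add]
    gcongr <;> simpa only [mul_pow] using pow_le_pow_left₀ (norm_nonneg _) (T.le_opNorm _) 2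
  · refine T.opNorm_le_bound (norm_nonneg _) fun u => ?_
    have h := Tc.le_opNorm (complexify u 0)
    rw [toEuclideanCLM_map_ofReal_complexify, ← sq_le_sq₀ (norm_nonneg _) (by positivity),
      mul_pow, norm_complexify_sq, norm_complexify_sq] at h
    rw [← sq_le_sq₀ (norm_nonneg _) (by positivity), mul_pow]
    simpa using h

end Complexify

end Matrix

namespace spectrum

theorem spectralRadius_mul_comm {𝕜 A : Type*} [NormedField 𝕜] [Ring A] [Algebra 𝕜 A] (a b : A) :
    spectralRadius 𝕜 (a * b) = spectralRadius 𝕜 (b * a) := by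
  suffices h : ∀ x y : A, spectralRadius 𝕜 (x * y) ≤ spectralRadius 𝕜 (y * x) from
    le_antisymm (h a b) (h b a)
  intro x y
  refine iSup₂_le fun k hk => ?_
  rcases eq_or_ne k 0 with rfl | hk0
  · simp
  · have hk' : k ∈ spectrum 𝕜 (y * x) \ {0} := nonzero_mul_comm (𝕜 := 𝕜) x y ▸ ⟨hk, hk0⟩
    exact le_iSup₂ (f := fun k (_ : k ∈ spectrum 𝕜 (y * x)) => (‖k‖₊ : ℝ≥0∞)) k hk'.1

variable {A : Type*} [NormedRing A] [NormedAlgebra ℂ A] [CompleteSpace A]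

theorem spectralRadius_ne_top (a : A) : spectralRadius ℂ a ≠ ∞ :=
  ((spectralRadius_le_pow_nnnorm_pow_one_div ℂ a 0).trans_lt (by simp [ENNReal.mul_lt_top])).ne

theorem spectralRadius_le_of_forall_nnnorm_pow_le {a b : A} (h : ∀ m : ℕ, ‖a ^ m‖₊ ≤ ‖b ^ m‖₊) :
    spectralRadius ℂ a ≤ spectralRadius ℂ b :=
  le_of_tendsto_of_tendsto' (pow_nnnorm_pow_one_div_tendsto_nhds_spectralRadius a)
    (pow_nnnorm_pow_one_div_tendsto_nhds_spectralRadius b) fun m => by gcongr; exact h m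

theorem spectralRadius_pow_three_le_of_forall_nnnorm_pow_le {a b c d : A}
    (h : ∀ m : ℕ, ‖a ^ m‖₊ ^ 3 ≤ ‖b ^ m‖₊ * ‖c ^ m‖₊ * ‖d ^ m‖₊) :
    spectralRadius ℂ a ^ 3 ≤ spectralRadius ℂ b * spectralRadius ℂ c * spectralRadius ℂ d := by
  have gelfand := fun x : A => pow_nnnorm_pow_one_div_tendsto_nhds_spectralRadius x
  have hbc := ENNReal.Tendsto.mul (gelfand b) (Or.inr (spectralRadius_ne_top c)) (gelfand c)
    (Or.inr (spectralRadius_ne_top b))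
  have hbcd := ENNReal.Tendsto.mul hbc (Or.inr (spectralRadius_ne_top d)) (gelfand d)
    (Or.inr (ENNReal.mul_ne_top (spectralRadius_ne_top b) (spectralRadius_ne_top c)))
  refine le_of_tendsto_of_tendsto' (ENNReal.Tendsto.pow (gelfand a)) hbcd fun m => ?_
  rw [← ENNReal.mul_rpow_of_nonneg _ _ (by positivity),
    ← ENNReal.mul_rpow_of_nonneg _ _ (by positivity), ← ENNReal.rpow_natCast,
    ← ENNReal.rpow_mul, mul_comm, ENNReal.rpow_mul, ENNReal.rpow_natCast]
  gcongr
  exact_mod_cast h m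

end spectrum

theorem ENNReal.rpow_one_div_le_rpow_one_div_of_pow_le {x y : ℝ≥0∞} {p q : ℕ} (hp : p ≠ 0)
    (hq : q ≠ 0) (h : x ^ p ≤ y ^ q) : x ^ ((1:ℝ) / q) ≤ y ^ ((1:ℝ) / p) := by
  rw [← ENNReal.rpow_le_rpow_iff (z := p * q) (by positivity), ← ENNReal.rpow_mul,
    ← ENNReal.rpow_mul, show 1 / (q:ℝ) * (p * q) = p by field_simp,
    show 1 / (p:ℝ) * (p * q) = q by field_simp, ENNReal.rpow_natCast, ENNReal.rpow_natCast]
  exact h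

section SpectralRadius

variable {n : ℕ}

theorem specRad_mul_comm (M N : Matrix (Fin n) (Fin n) ℝ) : specRad (M * N) = specRad (N * M) := by
  simp only [specRad, Matrix.map_mul, spectrum.spectralRadius_mul_comm]

theorem specRad_pow_le (M : Matrix (Fin n) (Fin n) ℝ) {k : ℕ} (hk : k ≠ 0) :
    specRad M ^ k ≤ specRad (M ^ k) := by
  rw [specRad, specRad, Matrix.map_pow]
  exact spectrum.spectralRadius_pow_le _ k hk

theorem specRad_transpose_mul_self (M : Matrix (Fin n) (Fin n) ℝ) :
    specRad (Mᵀ * M) = (‖toEuclideanCLM (𝕜 := ℝ) M‖₊ : ℝ≥0∞) ^ 2 := by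
  set T := toEuclideanCLM (𝕜 := ℂ) (M.map ((↑) : ℝ → ℂ))
  have hT : toEuclideanCLM (𝕜 := ℂ) ((Mᵀ * M).map (↑)) = star T * T := by
    rw [← map_star, ← map_mul]
    congr 1
    ext i j
    simp [Matrix.mul_apply]
  have hspec : specRad (Mᵀ * M) = spectralRadius ℂ (star T * T) := by
    rw [← hT, specRad, spectralRadius, spectralRadius, AlgEquiv.spectrum_eq]
    rfl
  have hnorm : ‖T‖₊ = ‖toEuclideanCLM (𝕜 := ℝ) M‖₊ :=
    Subtype.ext (norm_toEuclideanCLM_map_ofReal M)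
  rw [hspec, (IsSelfAdjoint.star_mul_self T).spectralRadius_eq_nnnorm,
    CStarRing.nnnorm_star_mul_self, hnorm, sq, ENNReal.coe_mul]

section LinftyOp

-- Gelfand's formula holds for any algebra norm; the ∞-operator norm is monotone in `|M i j|`.
open scoped Matrix.Norms.Operator

theorem specRad_le_of_abs_le {M N : Matrix (Fin n) (Fin n) ℝ} (h : ∀ i j, |M i j| ≤ N i j) :
    specRad M ≤ specRad N :=
  spectrum.spectralRadius_le_of_forall_nnnorm_pow_le fun k => by
    rw [linfty_opNNNorm_map_ofReal_pow, linfty_opNNNorm_map_ofReal_pow]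
    exact linfty_opNorm_le_of_abs_le (abs_pow_apply_le h k)

theorem specRad_hadamardGeomMean_pow_three_le_mul {P Q R : Matrix (Fin n) (Fin n) ℝ}
    (hP : ∀ i j, 0 ≤ P i j) (hQ : ∀ i j, 0 ≤ Q i j) (hR : ∀ i j, 0 ≤ R i j) :
    specRad (hadamardGeomMean P Q R) ^ 3 ≤ specRad P * specRad Q * specRad R :=
  spectrum.spectralRadius_pow_three_le_of_forall_nnnorm_pow_le fun k => by
    simp only [linfty_opNNNorm_map_ofReal_pow]
    have hG : ‖hadamardGeomMean P Q R ^ k‖ ≤ ‖hadamardGeomMean (P ^ k) (Q ^ k) (R ^ k)‖ :=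
      linfty_opNorm_le_of_abs_le fun i j => by
        rw [abs_of_nonneg (pow_apply_nonneg (hadamardGeomMean_nonneg hP hQ hR) k i j)]
        exact hadamardGeomMean_pow_apply_le hP hQ hR k i j
    have := (pow_le_pow_left₀ (norm_nonneg _) hG 3).trans
      (linfty_opNorm_hadamardGeomMean_pow_three_le (pow_apply_nonneg hP k)
        (pow_apply_nonneg hQ k) (pow_apply_nonneg hR k))
    exact_mod_cast this

end LinftyOp

theorem specRad_hadamardGeomMean_pow_three_le {P Q R : Matrix (Fin n) (Fin n) ℝ}
    (hP : ∀ i j, 0 ≤ P i j) (hQ : ∀ i j, 0 ≤ Q i j) (hR : ∀ i j, 0 ≤ R i j) :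
    specRad (hadamardGeomMean P Q R) ^ 3 ≤ specRad (P * Q * R) := by
  have hPQR := mul_apply_nonneg (mul_apply_nonneg hP hQ) hR
  have hQRP := mul_apply_nonneg (mul_apply_nonneg hQ hR) hP
  have hRPQ := mul_apply_nonneg (mul_apply_nonneg hR hP) hQ
  have hcyc : specRad (hadamardGeomMean (P * Q * R) (Q * R * P) (R * P * Q)) ≤
      specRad (P * Q * R) := by
    have h := specRad_hadamardGeomMean_pow_three_le_mul hPQR hQRP hRPQ
    have hQRP_eq : specRad (Q * R * P) = specRad (P * Q * R) := by
      rw [specRad_mul_comm, Matrix.mul_assoc]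
    have hRPQ_eq : specRad (R * P * Q) = specRad (P * Q * R) := by
      rw [Matrix.mul_assoc, specRad_mul_comm]
    rw [hQRP_eq, hRPQ_eq, ← pow_three'] at h
    exact (ENNReal.pow_le_pow_left_iff three_ne_zero).mp h
  calc specRad (hadamardGeomMean P Q R) ^ 3 ≤ specRad (hadamardGeomMean P Q R ^ 3) :=
        specRad_pow_le _ three_ne_zero
    _ ≤ specRad (hadamardGeomMean (P * Q * R) (Q * R * P) (R * P * Q)) :=
        specRad_le_of_abs_le fun i j => by
          rw [abs_of_nonneg (pow_apply_nonneg (hadamardGeomMean_nonneg hP hQ hR) 3 i j)]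
          exact hadamardGeomMean_pow_three_apply_le hP hQ hR i j
    _ ≤ specRad (P * Q * R) := hcyc

end SpectralRadius

section Main

variable {n : ℕ} {A B : Matrix (Fin n) (Fin n) ℝ} (hA : ∀ i j, 0 ≤ A i j) (hB : ∀ i j, 0 ≤ B i j)
include hA hB

theorem nnnorm_hadamardGeomMean_le_specRad :
    (‖toEuclideanCLM (𝕜 := ℝ) (hadamardGeomMean A Bᵀ A)‖₊ : ℝ≥0∞) ≤
      specRad (hadamardGeomMean (Aᵀ * Bᵀ) (Aᵀ * A) (B * A)) ^ ((1:ℝ)/2) := by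
  have hAt : ∀ i j, 0 ≤ Aᵀ i j := fun i j => hA j i
  have hBt : ∀ i j, 0 ≤ Bᵀ i j := fun i j => hB j i
  suffices h : specRad ((hadamardGeomMean A Bᵀ A)ᵀ * hadamardGeomMean A Bᵀ A) ≤
      specRad (hadamardGeomMean (Aᵀ * Bᵀ) (Aᵀ * A) (B * A)) by
    rw [specRad_transpose_mul_self, ← pow_one (specRad _)] at h
    simpa using ENNReal.rpow_one_div_le_rpow_one_div_of_pow_le two_ne_zero one_ne_zero h
  refine specRad_le_of_abs_le fun i j => ?_
  rw [transpose_hadamardGeomMean, transpose_transpose, ← hadamardGeomMean_rotate Aᵀ Aᵀ B,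
    hadamardGeomMean_comm A Bᵀ A, abs_of_nonneg (mul_apply_nonneg
      (hadamardGeomMean_nonneg hAt hAt hB) (hadamardGeomMean_nonneg hBt hA hA) i j)]
  exact hadamardGeomMean_mul_apply_le hAt hAt hB hBt hA hA i j

theorem specRad_hadamardGeomMean_le_nnnorm :
    specRad (hadamardGeomMean (Aᵀ * Bᵀ) (Aᵀ * A) (B * A)) ^ ((1:ℝ)/2) ≤
      (‖toEuclideanCLM (𝕜 := ℝ) (A * B * A)‖₊ : ℝ≥0∞) ^ ((1:ℝ)/3) := by
  have hAt : ∀ i j, 0 ≤ Aᵀ i j := fun i j => hA j i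
  have hBt : ∀ i j, 0 ≤ Bᵀ i j := fun i j => hB j i
  have h := specRad_hadamardGeomMean_pow_three_le (mul_apply_nonneg hAt hBt)
    (mul_apply_nonneg hAt hA) (mul_apply_nonneg hB hA)
  rw [show Aᵀ * Bᵀ * (Aᵀ * A) * (B * A) = (A * B * A)ᵀ * (A * B * A) by
    simp only [transpose_mul, Matrix.mul_assoc], specRad_transpose_mul_self] at h
  simpa using ENNReal.rpow_one_div_le_rpow_one_div_of_pow_le three_ne_zero two_ne_zero h

end Main

theorem stmt19 {n : ℕ} (A B : Matrix (Fin n) (Fin n) ℝ)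
    (hA : ∀ i j, 0 ≤ A i j) (hB : ∀ i j, 0 ≤ B i j) :
    (‖Matrix.toEuclideanCLM (𝕜 := ℝ)
        (Matrix.of fun i j => (A i j) ^ ((1:ℝ)/3) * (Bᵀ i j) ^ ((1:ℝ)/3) * (A i j) ^ ((1:ℝ)/3))‖₊ : ℝ≥0∞) ≤
        (specRad (Matrix.of fun i j =>
          ((Aᵀ * Bᵀ) i j) ^ ((1:ℝ)/3) * ((Aᵀ * A) i j) ^ ((1:ℝ)/3) * ((B * A) i j) ^ ((1:ℝ)/3))) ^ ((1:ℝ)/2) ∧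
      (specRad (Matrix.of fun i j =>
          ((Aᵀ * Bᵀ) i j) ^ ((1:ℝ)/3) * ((Aᵀ * A) i j) ^ ((1:ℝ)/3) * ((B * A) i j) ^ ((1:ℝ)/3))) ^ ((1:ℝ)/2) ≤
        (‖Matrix.toEuclideanCLM (𝕜 := ℝ) (A * B * A)‖₊ : ℝ≥0∞) ^ ((1:ℝ)/3) :=
  ⟨nnnorm_hadamardGeomMean_le_specRad hA hB, specRad_hadamardGeomMean_le_nnnorm hA hB⟩
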